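/- arXiv:1001.1285 — 8 statements merged into one kernel-verified Lean document; each statement's English description precedes it below -/
import Mathlib

section
/- Let A be an associative ℂ-algebra and let b⁺, b⁻ ∈ A. Define Ĥ = (i/2)((b⁺)² - (b⁻)²). Then [Ĥ, b⁺] = -i·b⁻ and [Ĥ, b⁻] = -i·b⁺ hold if and only if the osp(1|2) defining relations [{b⁻, b⁺}, b⁺] = 2b⁺ and [{b⁻, b⁺}, b⁻] = -2b⁻ hold. -/
/-!
In any ring, `[p² - m², p] = [{m, p}, m]` and `[p² - m², m] = -[{m, p}, p]`. Pulling the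
nonzero scalar `i/2` out of `[Ĥ, ·]` and cancelling it, the two equations for `Ĥ` become the
two osp(1|2) relations, in swapped order.
-/

section Ring

variable {R : Type*} [Ring R]

theorem sq_sub_sq_mul_sub_mul_left (a b : R) :
    (a ^ 2 - b ^ 2) * a - a * (a ^ 2 - b ^ 2) = (b * a + a * b) * b - b * (b * a + a * b) := by
  noncomm_ring

theorem sq_sub_sq_mul_sub_mul_right (a b : R) :
    (a ^ 2 - b ^ 2) * b - b * (a ^ 2 - b ^ 2) =
      -((b * a + a * b) * a - a * (b * a + a * b)) := by
  noncomm_ring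

end Ring

theorem smul_mul_sub_mul_smul {K A : Type*} [CommSemiring K] [Ring A] [Algebra K A]
    (c : K) (x y : A) : (c • x) * y - y * (c • x) = c • (x * y - y * x) := by
  rw [smul_mul_assoc, mul_smul_comm, smul_sub]

/-- With Ĥ = (i/2)((b⁺)² - (b⁻)²), the relations
[Ĥ, b⁺] = -i·b⁻ and [Ĥ, b⁻] = -i·b⁺ hold iff the osp(1|2) defining relations
[{b⁻, b⁺}, b⁺] = 2b⁺ and [{b⁻, b⁺}, b⁻] = -2b⁻ hold. -/
theorem commutator_H_iff_osp_relations
    {A : Type*} [Ring A] [Algebra ℂ A] (bp bm H : A)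
    (hH : H = (Complex.I / 2) • (bp ^ 2 - bm ^ 2)) :
    (H * bp - bp * H = (-Complex.I) • bm ∧
     H * bm - bm * H = (-Complex.I) • bp) ↔
    ((bm * bp + bp * bm) * bp - bp * (bm * bp + bp * bm) = (2 : ℂ) • bp ∧
     (bm * bp + bp * bm) * bm - bm * (bm * bp + bp * bm) = (-2 : ℂ) • bm) := by
  subst hH
  have hI : -Complex.I = Complex.I / 2 * -2 := by ring
  have hI0 : Complex.I / 2 ≠ 0 := by simp
  rw [smul_mul_sub_mul_smul, smul_mul_sub_mul_smul, sq_sub_sq_mul_sub_mul_left,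
    sq_sub_sq_mul_sub_mul_right, hI, mul_smul, mul_smul, smul_right_inj hI0,
    smul_right_inj hI0, neg_smul, neg_smul, neg_inj, ← neg_smul, and_comm]
end

section
/- Let A be an associative ℂ-algebra and let b⁺, b⁻ ∈ A satisfy the osp(1|2) defining relations [{b⁻, b⁺}, b⁺] = 2b⁺ and [{b⁻, b⁺}, b⁻] = -2b⁻. Define h = (1/2){b⁻, b⁺}, e = (1/4){b⁺, b⁺}, f = -(1/4){b⁻, b⁻}, and Ω = -(1/4)(4fe + h² + 2h). Then (b⁻b⁺ - b⁺b⁻)² = 4(b⁻b⁺ - b⁺b⁻) - 16Ω. -/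
/-!
Write `X = {b⁻, b⁺}`, `m = b⁻b⁺` and `n = b⁺b⁻`, so that `X = m + n` and the bracket is `m - n`.
The first relation says `[b⁻, (b⁺)²] = 2b⁺`, and the two relations together say that `X` acts by
`±2` on `b^±`, hence commutes with `m` and therefore with `n`. For commuting `m, n` we have
`(m - n)² = (m + n)² - 4mn`, and `mn = b⁻(b⁺)²b⁻ = (b⁻)²(b⁺)² - 2m`. Since
`16Ω = 4(b⁻)²(b⁺)² - X² - 4X`, both sides of the identity agree.
-/

theorem Commute.sub_sq_eq_add_sq_sub_four_mul {R : Type*} [Ring R] {a b : R} (h : Commute a b) :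
    (a - b) ^ 2 = (a + b) ^ 2 - 4 • (a * b) := by
  rw [h.sub_sq, h.add_sq]
  noncomm_ring

section Osp

variable {R A : Type*} [CommRing R] [Ring A] [Algebra R A]

theorem anticomm_mul_sub_mul_anticomm (a b : A) :
    (a * b + b * a) * b - b * (a * b + b * a) = a * (b * b) - b * b * a := by
  noncomm_ring

theorem commute_anticomm_mul_of_bracket_smul {bp bm : A} {c : R}
    (hp : (bm * bp + bp * bm) * bp - bp * (bm * bp + bp * bm) = c • bp)
    (hm : (bm * bp + bp * bm) * bm - bm * (bm * bp + bp * bm) = (-c) • bm) :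
    Commute (bm * bp + bp * bm) (bm * bp) := by
  set X := bm * bp + bp * bm
  have hXp : X * bp = bp * X + c • bp := by rw [← hp]; abel
  have hXm : X * bm = bm * X - c • bm := by rw [sub_eq_add_neg, ← neg_smul, ← hm]; abel
  calc X * (bm * bp) = (X * bm) * bp := (mul_assoc _ _ _).symm
    _ = bm * (X * bp) - c • (bm * bp) := by
      rw [hXm, sub_mul, mul_assoc, smul_mul_assoc]
    _ = bm * bp * X := by
      rw [hXp, mul_add, mul_smul_comm, add_sub_cancel_right, mul_assoc]

theorem commute_mul_mul_of_bracket_smul {bp bm : A} {c : R}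
    (hp : (bm * bp + bp * bm) * bp - bp * (bm * bp + bp * bm) = c • bp)
    (hm : (bm * bp + bp * bm) * bm - bm * (bm * bp + bp * bm) = (-c) • bm) :
    Commute (bm * bp) (bp * bm) := by
  have h := (commute_anticomm_mul_of_bracket_smul hp hm).sub_left (Commute.refl (bm * bp))
  rw [add_sub_cancel_left] at h
  exact h.symm

theorem mul_mul_mul_of_bracket_smul {bp bm : A} {c : R}
    (hp : (bm * bp + bp * bm) * bp - bp * (bm * bp + bp * bm) = c • bp) :
    bm * bp * (bp * bm) = bm * bm * (bp * bp) - c • (bm * bp) := by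
  rw [anticomm_mul_sub_mul_anticomm, sub_eq_iff_eq_add'] at hp
  calc bm * bp * (bp * bm) = bm * (bp * bp * bm) := by simp only [mul_assoc]
    _ = bm * bm * (bp * bp) - c • (bm * bp) := by
      rw [← sub_eq_of_eq_add hp, mul_sub, mul_smul_comm, mul_assoc]

end Osp

/-- If b⁺, b⁻ satisfy the osp(1|2) defining relations and
Ω = -(1/4)(4fe + h² + 2h), then (b⁻b⁺ - b⁺b⁻)² = 4(b⁻b⁺ - b⁺b⁻) - 16Ω. -/
theorem square_of_bracket_identity
    {A : Type*} [Ring A] [Algebra ℂ A] (bp bm : A)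
    (rel1 : (bm * bp + bp * bm) * bp - bp * (bm * bp + bp * bm) = (2 : ℂ) • bp)
    (rel2 : (bm * bp + bp * bm) * bm - bm * (bm * bp + bp * bm) = (-2 : ℂ) • bm)
    (h e f Ω : A)
    (hh : h = (1 / 2 : ℂ) • (bm * bp + bp * bm))
    (he : e = (1 / 4 : ℂ) • (bp * bp + bp * bp))
    (hf : f = -((1 / 4 : ℂ) • (bm * bm + bm * bm)))
    (hΩ : Ω = -((1 / 4 : ℂ) • ((4 : ℂ) • (f * e) + h ^ 2 + (2 : ℂ) • h))) :
    (bm * bp - bp * bm) ^ 2 = (4 : ℂ) • (bm * bp - bp * bm) - (16 : ℂ) • Ω := by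
  have hcasimir : (16 : ℂ) • Ω = (4 : ℂ) • (bm * bm * (bp * bp))
      - (bm * bp + bp * bm) ^ 2 - (4 : ℂ) • (bm * bp + bp * bm) := by
    subst hΩ hh he hf
    simp only [sq, smul_add, smul_neg, mul_add, add_mul, neg_mul, smul_mul_assoc,
      mul_smul_comm, smul_smul, mul_assoc]
    module
  rw [(commute_mul_mul_of_bracket_smul rel1 rel2).sub_sq_eq_add_sq_sub_four_mul,
    mul_mul_mul_of_bracket_smul rel1, hcasimir]
  module
end

section
/- Let A be an associative ℂ-algebra and let b⁺, b⁻ ∈ A satisfy the osp(1|2) defining relations [{b⁻, b⁺}, b⁺] = 2b⁺ and [{b⁻, b⁺}, b⁻] = -2b⁻. Define h = (1/2){b⁻, b⁺}, e = (1/4){b⁺, b⁺}, f = -(1/4){b⁻, b⁻}, Ω = -(1/4)(4fe + h² + 2h), and C = -4Ω + (1/2)(b⁻b⁺ - b⁺b⁻). Then 4Ωb⁺ = b⁺(1 - 2C - 4Ω) and 4Ωb⁻ = b⁻(1 - 2C - 4Ω). -/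
/-!
Write `H = {b⁻, b⁺}` and `K = [b⁻, b⁺]`. Since `[{a, b}, b] = [a, b²]`, the osp(1|2) relations say
`[b⁻, b⁺²] = 2b⁺` and `[b⁻², b⁺] = 2b⁻`. With these, a direct computation of the commutator of
`16Ω = 4b⁻²b⁺² - H² - 4H` with `b±` gives `[16Ω, b±] = 4b±(1 - K)`, which is the claim after
clearing the factor 4.
-/

namespace Osp12

variable {R : Type*} [Ring R]

/-- `16Ω` (`Ω` is the sl(2) Casimir), written without denominators so that it makes sense in any
ring. -/
def casimir16 (bp bm : R) : R :=
  4 * (bm * bm * (bp * bp)) - (bm * bp + bp * bm) * (bm * bp + bp * bm) - 4 * (bm * bp + bp * bm)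

lemma anticomm_mul_sub_mul_anticomm (a b : R) :
    (a * b + b * a) * b - b * (a * b + b * a) = a * (b * b) - b * b * a := by
  noncomm_ring

variable {bp bm : R}

lemma mul_sq_sub_sq_mul_eq
    (rel1 : (bm * bp + bp * bm) * bp - bp * (bm * bp + bp * bm) = 2 * bp) :
    bm * (bp * bp) - bp * bp * bm = 2 * bp := by
  rwa [← anticomm_mul_sub_mul_anticomm]

lemma sq_mul_sub_mul_sq_eq
    (rel2 : (bm * bp + bp * bm) * bm - bm * (bm * bp + bp * bm) = -2 * bm) :
    bm * bm * bp - bp * (bm * bm) = 2 * bm := by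
  rw [add_comm, anticomm_mul_sub_mul_anticomm] at rel2
  linear_combination (norm := noncomm_ring) -rel2

variable
  (rel1 : (bm * bp + bp * bm) * bp - bp * (bm * bp + bp * bm) = 2 * bp)
  (rel2 : (bm * bp + bp * bm) * bm - bm * (bm * bp + bp * bm) = -2 * bm)
include rel1 rel2

theorem casimir16_mul_bp :
    casimir16 bp bm * bp = bp * (casimir16 bp bm + 4 * (1 - (bm * bp - bp * bm))) := by
  unfold casimir16
  linear_combination (norm := noncomm_ring)
    4 * (sq_mul_sub_mul_sq_eq rel2 * (bp * bp)) - rel1 * (bm * bp + bp * bm)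
      - (bm * bp + bp * bm) * rel1 + 2 * mul_sq_sub_sq_mul_eq rel1

theorem casimir16_mul_bm :
    casimir16 bp bm * bm = bm * (casimir16 bp bm + 4 * (1 - (bm * bp - bp * bm))) := by
  unfold casimir16
  linear_combination (norm := noncomm_ring)
    -4 * (bm * bm * mul_sq_sub_sq_mul_eq rel1) - rel2 * (bm * bp + bp * bm)
      - (bm * bp + bp * bm) * rel2 + 2 * sq_mul_sub_mul_sq_eq rel2

end Osp12

open Osp12 in
/-- If b⁺, b⁻ satisfy the osp(1|2) defining relations, with
Ω = -(1/4)(4fe + h² + 2h) and C = -4Ω + (1/2)(b⁻b⁺ - b⁺b⁻), then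
4Ωb⁺ = b⁺(1 - 2C - 4Ω) and 4Ωb⁻ = b⁻(1 - 2C - 4Ω). -/
theorem four_omega_b_identity
    {A : Type*} [Ring A] [Algebra ℂ A] (bp bm : A)
    (rel1 : (bm * bp + bp * bm) * bp - bp * (bm * bp + bp * bm) = (2 : ℂ) • bp)
    (rel2 : (bm * bp + bp * bm) * bm - bm * (bm * bp + bp * bm) = (-2 : ℂ) • bm)
    (h e f Ω C : A)
    (hh : h = (1 / 2 : ℂ) • (bm * bp + bp * bm))
    (he : e = (1 / 4 : ℂ) • (bp * bp + bp * bp))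
    (hf : f = -((1 / 4 : ℂ) • (bm * bm + bm * bm)))
    (hΩ : Ω = -((1 / 4 : ℂ) • ((4 : ℂ) • (f * e) + h ^ 2 + (2 : ℂ) • h)))
    (hC : C = -((4 : ℂ) • Ω) + (1 / 2 : ℂ) • (bm * bp - bp * bm)) :
    ((4 : ℂ) • Ω) * bp = bp * (1 - (2 : ℂ) • C - (4 : ℂ) • Ω) ∧
    ((4 : ℂ) • Ω) * bm = bm * (1 - (2 : ℂ) • C - (4 : ℂ) • Ω) := by
  simp only [Algebra.smul_def, map_neg, map_ofNat] at rel1 rel2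
  have hΩ16 : (4 : ℂ) • ((4 : ℂ) • Ω) = casimir16 bp bm := by
    subst hΩ hh he hf
    simp only [casimir16, pow_two, smul_add, smul_neg, mul_smul_comm, smul_mul_assoc, smul_smul,
      mul_add, add_mul, neg_mul]
    norm_num
    simp only [Algebra.smul_def, map_ofNat]
    noncomm_ring
  have hrhs : (4 : ℂ) • (1 - (2 : ℂ) • C - (4 : ℂ) • Ω)
      = casimir16 bp bm + 4 * (1 - (bm * bp - bp * bm)) := by
    rw [← hΩ16, hC, ← map_ofNat (algebraMap ℂ A) 4, ← Algebra.smul_def]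
    module
  have cancel_four : ∀ b : A,
      casimir16 bp bm * b = b * (casimir16 bp bm + 4 * (1 - (bm * bp - bp * bm))) →
      ((4 : ℂ) • Ω) * b = b * (1 - (2 : ℂ) • C - (4 : ℂ) • Ω) := fun b hb => by
    rwa [← smul_right_inj (by norm_num : (4 : ℂ) ≠ 0), ← smul_mul_assoc, ← mul_smul_comm, hΩ16,
      hrhs]
  exact ⟨cancel_four bp (casimir16_mul_bp rel1 rel2), cancel_four bm (casimir16_mul_bm rel1 rel2)⟩
end

section
/- Let μ, δ be real numbers. There exists no function a : ℤ → ℝ satisfying a_0 = 1, a_{2k+1} = 2(μ + k - δ)·a_{2k} and a_{2k} = (1/2)(μ + k + δ)·a_{2k-1} for all integers k, together with a_k > 0 for all k ∈ ℤ. (Consequently, every irreducible ∗-representation of osp(1|2) must be a lowest weight representation.) -/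
/-- there is no doubly infinite positive sequence a : ℤ → ℝ with
a₀ = 1 satisfying a_{2k+1} = 2(μ+k-δ)a_{2k} and a_{2k} = (1/2)(μ+k+δ)a_{2k-1}
for all integers k.  (Hence every irreducible ∗-representation of osp(1|2)
must be a lowest weight representation.) -/
theorem no_doubly_infinite_positive_sequence
    (μ δ : ℝ) :
    ¬ ∃ a : ℤ → ℝ,
        a 0 = 1 ∧
        (∀ k : ℤ, a (2 * k + 1) = 2 * (μ + k - δ) * a (2 * k)) ∧
        (∀ k : ℤ, a (2 * k) = (1 / 2) * (μ + k + δ) * a (2 * k - 1)) ∧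
        (∀ k : ℤ, 0 < a k) := by
  rintro ⟨a, -, hodd, -, hpos⟩
  -- The factor μ + k - δ in the odd step becomes nonpositive once k ≤ δ - μ.
  obtain ⟨k, hk⟩ : ∃ k : ℤ, μ + k - δ ≤ 0 :=
    ⟨⌊δ - μ⌋, by linarith [Int.floor_le (δ - μ)]⟩
  refine lt_irrefl (0 : ℝ) ?_
  calc 0 < a (2 * k + 1) := hpos _
    _ = 2 * (μ + k - δ) * a (2 * k) := hodd k
    _ ≤ 0 := mul_nonpos_of_nonpos_of_nonneg (by linarith) (hpos _).le
end

section
/- Let μ > 0 be a real number, let V be the complex vector space of finitely supported functions ℕ → ℂ with standard basis (e_k)_{k ∈ ℕ}, and define linear operators b⁺, b⁻ on V by b⁺e_{2k} = √(2(2μ+k))·e_{2k+1}, b⁻e_{2k} = √(2k)·e_{2k-1} (so b⁻e_0 = 0), b⁺e_{2k+1} = √(2(k+1))·e_{2k+2}, and b⁻e_{2k+1} = √(2(2μ+k))·e_{2k}, for all k ∈ ℕ. Then b⁺ and b⁻ satisfy the osp(1|2) defining relations [{b⁻, b⁺}, b⁺] = 2b⁺ and [{b⁻, b⁺}, b⁻]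 = -2b⁻ as linear operators on V. -/
/-!
Both operators are ladder operators for the basis `eₙ` with one common weight sequence `w`:
`b⁺ eₙ = wₙ eₙ₊₁` and `b⁻ eₙ₊₁ = wₙ eₙ`. Hence `{b⁻, b⁺}` is diagonal with eigenvalue
`wₙ² + wₙ₋₁²` on `eₙ`, which for the given weights equals `4μ + 2n`. An operator that is
diagonal with eigenvalues in arithmetic progression of step `2` has commutator `2T` with any
operator `T` raising the index by one and `-2T` with any operator lowering it by one.
-/

open Finsupp

section Ladder

variable {R : Type*} [CommRing R]

theorem commutator_eq_smul_of_raising {H T : Module.End R (ℕ →₀ R)} {h a : ℕ → R} {d : R}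
    (hH : ∀ n, H (single n 1) = h n • single n 1)
    (hT : ∀ n, T (single n 1) = a n • single (n + 1) 1)
    (hstep : ∀ n, h (n + 1) - h n = d) :
    H * T - T * H = d • T := by
  refine Finsupp.basisSingleOne.ext fun n => ?_
  simp only [coe_basisSingleOne, LinearMap.sub_apply, Module.End.mul_apply, LinearMap.smul_apply,
    hT, hH, map_smul, smul_smul, ← sub_smul, ← hstep n]
  ring_nf

theorem commutator_eq_neg_smul_of_lowering {H T : Module.End R (ℕ →₀ R)} {h a : ℕ → R} {d : R}
    (hH : ∀ n, H (single n 1) = h n • single n 1)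
    (hT₀ : T (single 0 1) = 0) (hT : ∀ n, T (single (n + 1) 1) = a n • single n 1)
    (hstep : ∀ n, h (n + 1) - h n = d) :
    H * T - T * H = -d • T := by
  refine Finsupp.basisSingleOne.ext fun n => ?_
  cases n with
  | zero =>
    simp only [coe_basisSingleOne, LinearMap.sub_apply, Module.End.mul_apply,
      LinearMap.smul_apply, hT₀, hH, map_smul, map_zero, smul_zero, sub_zero]
  | succ n =>
    simp only [coe_basisSingleOne, LinearMap.sub_apply, Module.End.mul_apply,
      LinearMap.smul_apply, hT, hH, map_smul, smul_smul, ← sub_smul, ← hstep n]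
    ring_nf

variable {w : ℕ → R} {bp bm : Module.End R (ℕ →₀ R)}
  (hbp : ∀ n, bp (single n 1) = w n • single (n + 1) 1)
  (hbm₀ : bm (single 0 1) = 0) (hbm : ∀ n, bm (single (n + 1) 1) = w n • single n 1)
include hbp hbm₀ hbm

theorem anticommutator_single_of_ladder {c : R} (hw₀ : w 0 * w 0 = c)
    (hw : ∀ n, w (n + 1) * w (n + 1) + w n * w n = c + 2 * (n + 1)) (n : ℕ) :
    (bm * bp + bp * bm) (single n 1) = (c + 2 * n) • single n 1 := by
  cases n with
  | zero =>
    simp only [LinearMap.add_apply, Module.End.mul_apply, hbp, hbm, hbm₀, map_smul, map_zero,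
      smul_smul, add_zero, hw₀, Nat.cast_zero, mul_zero]
  | succ n =>
    simp only [LinearMap.add_apply, Module.End.mul_apply, hbp, hbm, map_smul, smul_smul,
      ← add_smul, hw, Nat.cast_succ]

theorem osp_relations_of_ladder {c : R} (hw₀ : w 0 * w 0 = c)
    (hw : ∀ n, w (n + 1) * w (n + 1) + w n * w n = c + 2 * (n + 1)) :
    (bm * bp + bp * bm) * bp - bp * (bm * bp + bp * bm) = (2 : R) • bp ∧
    (bm * bp + bp * bm) * bm - bm * (bm * bp + bp * bm) = (-2 : R) • bm := by
  have hH := anticommutator_single_of_ladder hbp hbm₀ hbm hw₀ hw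
  have hstep (n : ℕ) : c + 2 * ((n + 1 : ℕ) : R) - (c + 2 * n) = 2 := by push_cast; ring
  exact ⟨commutator_eq_smul_of_raising hH hbp hstep,
    commutator_eq_neg_smul_of_lowering hH hbm₀ hbm hstep⟩

end Ladder

noncomputable def parabosonWeight (μ : ℝ) (n : ℕ) : ℝ :=
  if Even n then √(2 * (2 * μ + (n / 2 : ℕ))) else √(2 * ((n / 2 : ℕ) + 1))

theorem parabosonWeight_two_mul (μ : ℝ) (k : ℕ) :
    parabosonWeight μ (2 * k) = √(2 * (2 * μ + k)) := by
  simp [parabosonWeight]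

theorem parabosonWeight_two_mul_add_one (μ : ℝ) (k : ℕ) :
    parabosonWeight μ (2 * k + 1) = √(2 * (k + 1)) := by
  simp [parabosonWeight, Nat.not_even_bit1, show (2 * k + 1) / 2 = k by omega]

theorem parabosonWeight_mul_self_zero {μ : ℝ} (hμ : 0 ≤ μ) :
    parabosonWeight μ 0 * parabosonWeight μ 0 = 4 * μ := by
  rw [← mul_zero 2, parabosonWeight_two_mul, Real.mul_self_sqrt (by positivity)]
  ring

theorem parabosonWeight_mul_self_succ_add {μ : ℝ} (hμ : 0 ≤ μ) (n : ℕ) :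
    parabosonWeight μ (n + 1) * parabosonWeight μ (n + 1) +
      parabosonWeight μ n * parabosonWeight μ n = 4 * μ + 2 * (n + 1) := by
  obtain ⟨k, rfl | rfl⟩ := Nat.even_or_odd' n
  · rw [parabosonWeight_two_mul_add_one, parabosonWeight_two_mul,
      Real.mul_self_sqrt (by positivity), Real.mul_self_sqrt (by positivity)]
    push_cast
    ring
  · rw [show 2 * k + 1 + 1 = 2 * (k + 1) by ring, parabosonWeight_two_mul,
      parabosonWeight_two_mul_add_one, Real.mul_self_sqrt (by positivity),
      Real.mul_self_sqrt (by positivity)]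
    push_cast
    ring

/-- for μ > 0, the operators b⁺, b⁻ on the space of finitely
supported functions ℕ → ℂ defined on the standard basis by
b⁺e_{2k} = √(2(2μ+k))·e_{2k+1}, b⁻e_{2k} = √(2k)·e_{2k-1} (b⁻e₀ = 0),
b⁺e_{2k+1} = √(2(k+1))·e_{2k+2}, b⁻e_{2k+1} = √(2(2μ+k))·e_{2k}
satisfy the osp(1|2) defining relations. -/
theorem representation_satisfies_osp_relations
    (μ : ℝ) (hμ : 0 < μ)
    (bp bm : Module.End ℂ (ℕ →₀ ℂ))
    (hbp_even : ∀ k : ℕ, bp (Finsupp.single (2 * k) 1) =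
      ((Real.sqrt (2 * (2 * μ + k)) : ℝ) : ℂ) • Finsupp.single (2 * k + 1) 1)
    (hbm_zero : bm (Finsupp.single 0 1) = 0)
    (hbm_even : ∀ k : ℕ, bm (Finsupp.single (2 * (k + 1)) 1) =
      ((Real.sqrt (2 * (k + 1)) : ℝ) : ℂ) • Finsupp.single (2 * k + 1) 1)
    (hbp_odd : ∀ k : ℕ, bp (Finsupp.single (2 * k + 1) 1) =
      ((Real.sqrt (2 * (k + 1)) : ℝ) : ℂ) • Finsupp.single (2 * k + 2) 1)
    (hbm_odd : ∀ k : ℕ, bm (Finsupp.single (2 * k + 1) 1) =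
      ((Real.sqrt (2 * (2 * μ + k)) : ℝ) : ℂ) • Finsupp.single (2 * k) 1) :
    (bm * bp + bp * bm) * bp - bp * (bm * bp + bp * bm) = (2 : ℂ) • bp ∧
    (bm * bp + bp * bm) * bm - bm * (bm * bp + bp * bm) = (-2 : ℂ) • bm := by
  have hbp (n : ℕ) : bp (single n 1) = (parabosonWeight μ n : ℂ) • single (n + 1) 1 := by
    obtain ⟨k, rfl | rfl⟩ := Nat.even_or_odd' n
    · rw [hbp_even, parabosonWeight_two_mul]
    · rw [hbp_odd, parabosonWeight_two_mul_add_one]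
  have hbm (n : ℕ) : bm (single (n + 1) 1) = (parabosonWeight μ n : ℂ) • single n 1 := by
    obtain ⟨k, rfl | rfl⟩ := Nat.even_or_odd' n
    · rw [hbm_odd, parabosonWeight_two_mul]
    · rw [show 2 * k + 1 + 1 = 2 * (k + 1) by ring, hbm_even, parabosonWeight_two_mul_add_one]
  have hw₀ : (parabosonWeight μ 0 : ℂ) * parabosonWeight μ 0 = 4 * μ := by
    exact_mod_cast parabosonWeight_mul_self_zero hμ.le
  have hw (n : ℕ) : (parabosonWeight μ (n + 1) : ℂ) * parabosonWeight μ (n + 1) +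
      parabosonWeight μ n * parabosonWeight μ n = 4 * μ + 2 * (n + 1) := by
    exact_mod_cast parabosonWeight_mul_self_succ_add hμ.le n
  exact osp_relations_of_ladder hbp hbm_zero hbm hw₀ hw
end

section
/- Let μ > 0 be a real number, let V be the complex vector space of finitely supported functions ℕ → ℂ with standard basis (e_k)_{k ∈ ℕ}, and define linear operators b⁺, b⁻ on V by b⁺e_{2k} = √(2(2μ+k))·e_{2k+1}, b⁻e_{2k} = √(2k)·e_{2k-1} (so b⁻e_0 = 0), b⁺e_{2k+1} = √(2(k+1))·e_{2k+2}, and b⁻e_{2k+1} = √(2(2μ+k))·e_{2k}, for all k ∈ ℕ. Define h = (1/2){b⁻, b⁺}, e = (1/4){b⁺, b⁺}, f = -(1/4){b⁻, b⁻}, Ω = -(1/4)(4fe + h² + 2h), and C = -4Ω + (1/2)(b⁻b⁺ - b⁺b⁻). Then C·e_k = 2μ(2μ-1)·e_k for every k ∈ ℕ. -/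
/-!
Since `4fe = -b⁻²b⁺²`, the Casimir is `-b⁻²b⁺² + h² + 2h + (b⁻b⁺ - b⁺b⁻)/2`, so on a joint
eigenvector of `b⁻b⁺`, `b⁺b⁻`, `b⁻²b⁺²` with eigenvalues `S`, `T`, `P` it acts by
`-P + ((S + T)/2)² + (S + T) + (S - T)/2`. The basis is a ladder for `σ = ospWeight μ`:
`b⁺ e_k = √(σ k) e_{k+1}` and `b⁻ e_{k+1} = √(σ k) e_k`, so `S = σ k`, `T = σ (k - 1)`
(and `T = 0` at `k = 0`) and `P = σ k σ (k + 1)`; for either parity of `k` the scalar collapses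
to `2μ(2μ - 1)`.
-/

section Casimir

variable {K M : Type*} [Field K] [CharZero K] [AddCommGroup M] [Module K M]

def ospCasimirScalar (S T P : K) : K :=
  -P + ((S + T) / 2) ^ 2 + (S + T) + (S - T) / 2

theorem ospCasimir_apply_of_eigen {bp bm h e f Ω C : Module.End K M}
    (hh : h = (1 / 2 : K) • (bm * bp + bp * bm))
    (he : e = (1 / 4 : K) • (bp * bp + bp * bp))
    (hf : f = -((1 / 4 : K) • (bm * bm + bm * bm)))
    (hΩ : Ω = -((1 / 4 : K) • ((4 : K) • (f * e) + h ^ 2 + (2 : K) • h)))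
    (hC : C = -((4 : K) • Ω) + (1 / 2 : K) • (bm * bp - bp * bm))
    {w : M} {S T P : K} (hS : bm (bp w) = S • w) (hT : bp (bm w) = T • w)
    (hP : bm (bm (bp (bp w))) = P • w) :
    C w = ospCasimirScalar S T P • w := by
  subst hh he hf hΩ hC
  simp only [Module.End.mul_apply, pow_two, LinearMap.add_apply, LinearMap.sub_apply,
    LinearMap.smul_apply, LinearMap.neg_apply, map_smul, map_add, hS, hT, hP,
    smul_add, smul_neg, smul_smul, ospCasimirScalar]
  module

end Casimir

section Ladder

variable {R M : Type*} [CommRing R] [AddCommGroup M] [Module R M]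
  {bp bm : Module.End R M} {v : ℕ → M} {c : ℕ → R}

theorem lower_raise_apply (hraise : ∀ k, bp (v k) = c k • v (k + 1))
    (hlower : ∀ k, bm (v (k + 1)) = c k • v k) (k : ℕ) :
    bm (bp (v k)) = (c k * c k) • v k := by
  rw [hraise, map_smul, hlower, smul_smul]

theorem raise_lower_apply_succ (hraise : ∀ k, bp (v k) = c k • v (k + 1))
    (hlower : ∀ k, bm (v (k + 1)) = c k • v k) (k : ℕ) :
    bp (bm (v (k + 1))) = (c k * c k) • v (k + 1) := by
  rw [hlower, map_smul, hraise, smul_smul]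

theorem lower_lower_raise_raise_apply (hraise : ∀ k, bp (v k) = c k • v (k + 1))
    (hlower : ∀ k, bm (v (k + 1)) = c k • v k) (k : ℕ) :
    bm (bm (bp (bp (v k)))) = (c k * c k * (c (k + 1) * c (k + 1))) • v k := by
  simp only [hraise, hlower, map_smul, smul_smul]
  congr 1
  ring

end Ladder

def ospWeight (μ : ℝ) (k : ℕ) : ℝ :=
  if Even k then 4 * μ + k else k + 1

theorem ospWeight_two_mul (μ : ℝ) (j : ℕ) : ospWeight μ (2 * j) = 2 * (2 * μ + j) := by
  simp only [ospWeight, even_two_mul, if_true]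
  push_cast
  ring

theorem ospWeight_two_mul_add_one (μ : ℝ) (j : ℕ) :
    ospWeight μ (2 * j + 1) = 2 * (j + 1) := by
  simp only [ospWeight, Nat.not_even_two_mul_add_one, if_false]
  push_cast
  ring

theorem ospWeight_nonneg {μ : ℝ} (hμ : 0 ≤ μ) (k : ℕ) : 0 ≤ ospWeight μ k := by
  unfold ospWeight
  split_ifs <;> positivity

theorem ospCasimirScalar_ospWeight_zero (μ : ℝ) :
    ospCasimirScalar (ospWeight μ 0 : ℂ) 0 (ospWeight μ 0 * ospWeight μ 1) =
      ((2 * μ * (2 * μ - 1) : ℝ) : ℂ) := by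
  norm_num [ospCasimirScalar, ospWeight]
  ring

theorem ospCasimirScalar_ospWeight_succ (μ : ℝ) (k : ℕ) :
    ospCasimirScalar (ospWeight μ (k + 1) : ℂ) (ospWeight μ k)
        (ospWeight μ (k + 1) * ospWeight μ (k + 2)) =
      ((2 * μ * (2 * μ - 1) : ℝ) : ℂ) := by
  rcases Nat.even_or_odd' k with ⟨j, rfl | rfl⟩
  · rw [show 2 * j + 2 = 2 * (j + 1) by ring]
    simp only [ospCasimirScalar, ospWeight_two_mul, ospWeight_two_mul_add_one]
    push_cast
    ring
  · rw [show 2 * j + 1 + 1 = 2 * (j + 1) by ring, show 2 * j + 1 + 2 = 2 * (j + 1) + 1 by ring]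
    simp only [ospCasimirScalar, ospWeight_two_mul, ospWeight_two_mul_add_one]
    push_cast
    ring

theorem ofReal_sqrt_mul_self {x : ℝ} (hx : 0 ≤ x) :
    ((Real.sqrt x : ℝ) : ℂ) * ((Real.sqrt x : ℝ) : ℂ) = (x : ℂ) := by
  rw [← Complex.ofReal_mul, Real.mul_self_sqrt hx]

/-- for μ > 0 and the osp(1|2) representation operators b⁺, b⁻
on finitely supported functions ℕ → ℂ, the osp(1|2) Casimir
C = -4Ω + (1/2)(b⁻b⁺ - b⁺b⁻) acts as the constant 2μ(2μ-1) on every basis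
vector e_k. -/
theorem osp_casimir_action_on_basis
    (μ : ℝ) (hμ : 0 < μ)
    (bp bm : Module.End ℂ (ℕ →₀ ℂ))
    (hbp_even : ∀ k : ℕ, bp (Finsupp.single (2 * k) 1) =
      ((Real.sqrt (2 * (2 * μ + k)) : ℝ) : ℂ) • Finsupp.single (2 * k + 1) 1)
    (hbm_zero : bm (Finsupp.single 0 1) = 0)
    (hbm_even : ∀ k : ℕ, bm (Finsupp.single (2 * (k + 1)) 1) =
      ((Real.sqrt (2 * (k + 1)) : ℝ) : ℂ) • Finsupp.single (2 * k + 1) 1)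
    (hbp_odd : ∀ k : ℕ, bp (Finsupp.single (2 * k + 1) 1) =
      ((Real.sqrt (2 * (k + 1)) : ℝ) : ℂ) • Finsupp.single (2 * k + 2) 1)
    (hbm_odd : ∀ k : ℕ, bm (Finsupp.single (2 * k + 1) 1) =
      ((Real.sqrt (2 * (2 * μ + k)) : ℝ) : ℂ) • Finsupp.single (2 * k) 1)
    (h e f Ω C : Module.End ℂ (ℕ →₀ ℂ))
    (hh : h = (1 / 2 : ℂ) • (bm * bp + bp * bm))
    (he : e = (1 / 4 : ℂ) • (bp * bp + bp * bp))
    (hf : f = -((1 / 4 : ℂ) • (bm * bm + bm * bm)))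
    (hΩ : Ω = -((1 / 4 : ℂ) • ((4 : ℂ) • (f * e) + h ^ 2 + (2 : ℂ) • h)))
    (hC : C = -((4 : ℂ) • Ω) + (1 / 2 : ℂ) • (bm * bp - bp * bm)) :
    ∀ k : ℕ, C (Finsupp.single k 1) =
      ((2 * μ * (2 * μ - 1) : ℝ) : ℂ) • Finsupp.single k 1 := by
  have hraise : ∀ k, bp (Finsupp.single k 1) =
      ((Real.sqrt (ospWeight μ k) : ℝ) : ℂ) • Finsupp.single (k + 1) 1 := by
    intro k
    rcases Nat.even_or_odd' k with ⟨j, rfl | rfl⟩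
    · rw [ospWeight_two_mul]; exact hbp_even j
    · rw [ospWeight_two_mul_add_one]; exact hbp_odd j
  have hlower : ∀ k, bm (Finsupp.single (k + 1) 1) =
      ((Real.sqrt (ospWeight μ k) : ℝ) : ℂ) • Finsupp.single k 1 := by
    intro k
    rcases Nat.even_or_odd' k with ⟨j, rfl | rfl⟩
    · rw [ospWeight_two_mul]; exact hbm_odd j
    · rw [ospWeight_two_mul_add_one]; exact hbm_even j
  have hsq (k : ℕ) := ofReal_sqrt_mul_self (ospWeight_nonneg hμ.le k)
  rintro (_ | k)
  · have hT : bp (bm (Finsupp.single 0 1)) = (0 : ℂ) • Finsupp.single 0 1 := by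
      rw [hbm_zero, map_zero, zero_smul]
    rw [ospCasimir_apply_of_eigen hh he hf hΩ hC (lower_raise_apply hraise hlower 0) hT
      (lower_lower_raise_raise_apply hraise hlower 0), hsq, hsq,
      ← ospCasimirScalar_ospWeight_zero]
  · rw [ospCasimir_apply_of_eigen hh he hf hΩ hC (lower_raise_apply hraise hlower (k + 1))
      (raise_lower_apply_succ hraise hlower k)
      (lower_lower_raise_raise_apply hraise hlower (k + 1)), hsq, hsq, hsq,
      ← ospCasimirScalar_ospWeight_succ]
end

section
/- Let μ > 0 be a real number, let V be the complex vector space of finitely supported functions ℕ → ℂ with standard basis (e_k)_{k ∈ ℕ}, and define linear operators b⁺, b⁻ on V by b⁺e_{2k} = √(2(2μ+k))·e_{2k+1}, b⁻e_{2k} = √(2k)·e_{2k-1} (so b⁻e_0 = 0), b⁺e_{2k+1} = √(2(k+1))·e_{2k+2}, and b⁻e_{2k+1} = √(2(2μ+k))·e_{2k}, for all k ∈ ℕ. Then this representation is irreducible: every linear subspace U ⊆ V that is invariant under both b⁺ and b⁻ satisfies U = {0} or U = V. -/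
/-!
A lowering operator sends `e (n + 1)` to a nonzero multiple of `e n` and kills `e 0`, so `f ^ N`
sends `e N` to a nonzero multiple of `e 0` and kills every `e m` with `m < N`. Applied to a
nonzero vector of an invariant subspace whose support has maximum `N`, it shows `e 0` lies in the
subspace; a raising operator then produces every `e n` from `e 0`. The operators `b⁻` and `b⁺`
are lowering and raising because their coefficients are square roots of positive numbers, which
is where `μ > 0` enters.
-/

namespace Finsupp

variable {K : Type*} [DivisionRing K]

def IsLowering (f : Module.End K (ℕ →₀ K)) : Prop :=
  f (single 0 1) = 0 ∧ ∀ n, ∃ c : K, c ≠ 0 ∧ f (single (n + 1) 1) = c • single n 1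

def IsRaising (f : Module.End K (ℕ →₀ K)) : Prop :=
  ∀ n, ∃ c : K, c ≠ 0 ∧ f (single n 1) = c • single (n + 1) 1

namespace IsLowering

variable {f : Module.End K (ℕ →₀ K)}

theorem pow_apply_single_self (hf : IsLowering f) (n : ℕ) :
    ∃ c : K, c ≠ 0 ∧ (f ^ n) (single n 1) = c • single 0 1 := by
  induction n with
  | zero => exact ⟨1, one_ne_zero, by simp⟩
  | succ n ih =>
    obtain ⟨c, hc, hcn⟩ := ih
    obtain ⟨d, hd, hdn⟩ := hf.2 n
    refine ⟨d * c, mul_ne_zero hd hc, ?_⟩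
    rw [pow_succ, Module.End.mul_apply, hdn, map_smul, hcn, smul_smul]

theorem pow_apply_single_of_lt (hf : IsLowering f) {m n : ℕ} (hmn : m < n) :
    (f ^ n) (single m 1) = 0 := by
  obtain ⟨c, -, hcm⟩ := hf.pow_apply_single_self m
  obtain ⟨k, rfl⟩ := Nat.exists_eq_add_of_lt hmn
  rw [show m + k + 1 = k + (m + 1) by omega, pow_add, Module.End.mul_apply, pow_succ',
    Module.End.mul_apply, hcm, map_smul, hf.1, smul_zero, map_zero]

theorem pow_apply_of_support_le (hf : IsLowering f) {N : ℕ} {v : ℕ →₀ K}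
    (hv : ∀ n ∈ v.support, n ≤ N) : (f ^ N) v = v N • (f ^ N) (single N 1) := by
  have hterm (n : ℕ) : (f ^ N) (single n (v n)) = v n • (f ^ N) (single n 1) := by
    rw [← smul_single_one, map_smul]
  conv_lhs => rw [← sum_single v]
  rw [map_finsuppSum, Finsupp.sum, Finset.sum_eq_single N, hterm]
  · intro n hn hnN
    rw [hterm, hf.pow_apply_single_of_lt (lt_of_le_of_ne (hv n hn) hnN), smul_zero]
  · intro hN
    rw [notMem_support_iff.1 hN, single_zero, map_zero]

theorem single_zero_mem (hf : IsLowering f) {U : Submodule K (ℕ →₀ K)}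
    (hU : ∀ v ∈ U, f v ∈ U) (hbot : U ≠ ⊥) : single 0 1 ∈ U := by
  obtain ⟨v, hvU, hv⟩ := Submodule.exists_mem_ne_zero_of_ne_bot hbot
  have hsupp : v.support.Nonempty := support_nonempty_iff.2 hv
  set N := v.support.max' hsupp
  have hvN : v N ≠ 0 := mem_support_iff.1 (v.support.max'_mem hsupp)
  obtain ⟨c, hc, hcN⟩ := hf.pow_apply_single_self N
  have hmem := Module.End.pow_apply_mem_of_forall_mem N hU v hvU
  rwa [hf.pow_apply_of_support_le (v.support.le_max' · ·), hcN, U.smul_mem_iff hvN,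
    U.smul_mem_iff hc] at hmem

end IsLowering

theorem IsRaising.single_mem {f : Module.End K (ℕ →₀ K)} (hf : IsRaising f)
    {U : Submodule K (ℕ →₀ K)} (hU : ∀ v ∈ U, f v ∈ U) (h0 : single 0 1 ∈ U) (n : ℕ) :
    single n 1 ∈ U := by
  induction n with
  | zero => exact h0
  | succ n ih =>
    obtain ⟨c, hc, hcn⟩ := hf n
    rw [← U.smul_mem_iff hc, ← hcn]
    exact hU _ ih

theorem eq_top_of_forall_single_one_mem {U : Submodule K (ℕ →₀ K)}
    (h : ∀ n, single n 1 ∈ U) : U = ⊤ := by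
  rw [eq_top_iff, ← Finsupp.basisSingleOne.span_eq, Submodule.span_le, coe_basisSingleOne]
  rintro _ ⟨n, rfl⟩
  exact h n

theorem eq_bot_or_eq_top_of_isRaising_of_isLowering {bp bm : Module.End K (ℕ →₀ K)}
    (hbp : IsRaising bp) (hbm : IsLowering bm) (U : Submodule K (ℕ →₀ K))
    (hUp : ∀ v ∈ U, bp v ∈ U) (hUm : ∀ v ∈ U, bm v ∈ U) : U = ⊥ ∨ U = ⊤ :=
  or_iff_not_imp_left.2 fun hbot ↦
    eq_top_of_forall_single_one_mem (hbp.single_mem hUp (hbm.single_zero_mem hUm hbot))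

end Finsupp

theorem Nat.forall_of_forall_even_of_forall_odd {P : ℕ → Prop} (heven : ∀ k, P (2 * k))
    (hodd : ∀ k, P (2 * k + 1)) (n : ℕ) : P n := by
  obtain ⟨k, rfl | rfl⟩ := Nat.even_or_odd' n
  exacts [heven k, hodd k]

theorem Complex.ofReal_sqrt_ne_zero {x : ℝ} (hx : 0 < x) : ((Real.sqrt x : ℝ) : ℂ) ≠ 0 :=
  Complex.ofReal_ne_zero.2 (Real.sqrt_pos.2 hx).ne'

/-- for μ > 0, the osp(1|2) representation given by the
operators b⁺, b⁻ on finitely supported functions ℕ → ℂ is irreducible: every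
subspace invariant under b⁺ and b⁻ is {0} or the whole space. -/
theorem representation_is_irreducible
    (μ : ℝ) (hμ : 0 < μ)
    (bp bm : Module.End ℂ (ℕ →₀ ℂ))
    (hbp_even : ∀ k : ℕ, bp (Finsupp.single (2 * k) 1) =
      ((Real.sqrt (2 * (2 * μ + k)) : ℝ) : ℂ) • Finsupp.single (2 * k + 1) 1)
    (hbm_zero : bm (Finsupp.single 0 1) = 0)
    (hbm_even : ∀ k : ℕ, bm (Finsupp.single (2 * (k + 1)) 1) =
      ((Real.sqrt (2 * (k + 1)) : ℝ) : ℂ) • Finsupp.single (2 * k + 1) 1)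
    (hbp_odd : ∀ k : ℕ, bp (Finsupp.single (2 * k + 1) 1) =
      ((Real.sqrt (2 * (k + 1)) : ℝ) : ℂ) • Finsupp.single (2 * k + 2) 1)
    (hbm_odd : ∀ k : ℕ, bm (Finsupp.single (2 * k + 1) 1) =
      ((Real.sqrt (2 * (2 * μ + k)) : ℝ) : ℂ) • Finsupp.single (2 * k) 1) :
    ∀ U : Submodule ℂ (ℕ →₀ ℂ),
      (∀ v ∈ U, bp v ∈ U) → (∀ v ∈ U, bm v ∈ U) → U = ⊥ ∨ U = ⊤ := by
  have hμk (k : ℕ) : ((Real.sqrt (2 * (2 * μ + k)) : ℝ) : ℂ) ≠ 0 :=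
    Complex.ofReal_sqrt_ne_zero (by positivity)
  have hk (k : ℕ) : ((Real.sqrt (2 * (k + 1)) : ℝ) : ℂ) ≠ 0 :=
    Complex.ofReal_sqrt_ne_zero (by positivity)
  have hbp : Finsupp.IsRaising bp :=
    Nat.forall_of_forall_even_of_forall_odd (fun k ↦ ⟨_, hμk k, hbp_even k⟩)
      (fun k ↦ ⟨_, hk k, hbp_odd k⟩)
  have hbm : Finsupp.IsLowering bm :=
    ⟨hbm_zero, Nat.forall_of_forall_even_of_forall_odd (fun k ↦ ⟨_, hμk k, hbm_odd k⟩)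
      (fun k ↦ ⟨_, hk k, hbm_even k⟩)⟩
  exact Finsupp.eq_bot_or_eq_top_of_isRaising_of_isLowering hbp hbm
end

section
/- Let μ > 1/2 be a real number, let V be the complex vector space of finitely supported functions ℕ → ℂ with standard basis (f_j)_{j ∈ ℕ}, and define linear operators B⁺, B⁻ on V encoding the second representation class (with basis vectors indexed from -1, via f_j ↔ e_{j-1}): B⁻f_0 = 0, B⁺f_{2k} = √(2(2μ+k-1))·f_{2k+1} and B⁻f_{2k} = √(2k)·f_{2k-1} for k ≥ 0 (2k > 0 for B⁻), and B⁺f_{2k+1} = √(2(k+1))·f_{2k+2} and B⁻f_{2k+1} = √(2(2μ+k-1))·f_{2k} for k ≥ 0. Also define operators b⁺, b⁻ on V by the first representation class with parameter μ̄ = μ - 1/2: b⁺f_{2k} = √(2(2μ̄+k))·f_{2k+1}, b⁻f_{2k} = √(2k)·f_{2k-1}, b⁺f_{2k+1} = √(2(k+1))·f_{2k+2}, b⁻f_{2k+1} = √(2(2μ̄+k))·f_{2k}. Then B⁺ = b⁺ and B⁻ = b⁻ as linear operators on V; hence the two representation classes are equivalent, and there is only one class of irreducible ∗-representations of osp(1|2),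 parametrized by μ > 0. -/
theorem Finsupp.lhom_ext_even_odd {R M : Type*} [Semiring R] [AddCommMonoid M] [Module R M]
    {f g : (ℕ →₀ R) →ₗ[R] M}
    (h_even : ∀ k : ℕ, f (Finsupp.single (2 * k) 1) = g (Finsupp.single (2 * k) 1))
    (h_odd : ∀ k : ℕ, f (Finsupp.single (2 * k + 1) 1) = g (Finsupp.single (2 * k + 1) 1)) :
    f = g := by
  refine (Finsupp.basisSingleOne (R := R) (ι := ℕ)).ext fun n => ?_
  obtain ⟨k, rfl | rfl⟩ := Nat.even_or_odd' n
  · simpa using h_even k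
  · simpa using h_odd k

theorem second_class_equivalent_to_first_general
    (μ : ℝ)
    (Bp Bm bp bm : Module.End ℂ (ℕ →₀ ℂ))
    -- second representation class, shifted to ℕ via f_j ↔ e_{j-1}
    (hBm_zero : Bm (Finsupp.single 0 1) = 0)
    (hBp_even : ∀ k : ℕ, Bp (Finsupp.single (2 * k) 1) =
      ((Real.sqrt (2 * (2 * μ + k - 1)) : ℝ) : ℂ) • Finsupp.single (2 * k + 1) 1)
    (hBm_even : ∀ k : ℕ, Bm (Finsupp.single (2 * (k + 1)) 1) =
      ((Real.sqrt (2 * (k + 1)) : ℝ) : ℂ) • Finsupp.single (2 * k + 1) 1)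
    (hBp_odd : ∀ k : ℕ, Bp (Finsupp.single (2 * k + 1) 1) =
      ((Real.sqrt (2 * (k + 1)) : ℝ) : ℂ) • Finsupp.single (2 * k + 2) 1)
    (hBm_odd : ∀ k : ℕ, Bm (Finsupp.single (2 * k + 1) 1) =
      ((Real.sqrt (2 * (2 * μ + k - 1)) : ℝ) : ℂ) • Finsupp.single (2 * k) 1)
    -- first representation class with parameter μ̄ = μ - 1/2
    (hbp_even : ∀ k : ℕ, bp (Finsupp.single (2 * k) 1) =
      ((Real.sqrt (2 * (2 * (μ - 1 / 2) + k)) : ℝ) : ℂ) • Finsupp.single (2 * k + 1) 1)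
    (hbm_zero : bm (Finsupp.single 0 1) = 0)
    (hbm_even : ∀ k : ℕ, bm (Finsupp.single (2 * (k + 1)) 1) =
      ((Real.sqrt (2 * (k + 1)) : ℝ) : ℂ) • Finsupp.single (2 * k + 1) 1)
    (hbp_odd : ∀ k : ℕ, bp (Finsupp.single (2 * k + 1) 1) =
      ((Real.sqrt (2 * (k + 1)) : ℝ) : ℂ) • Finsupp.single (2 * k + 2) 1)
    (hbm_odd : ∀ k : ℕ, bm (Finsupp.single (2 * k + 1) 1) =
      ((Real.sqrt (2 * (2 * (μ - 1 / 2) + k)) : ℝ) : ℂ) • Finsupp.single (2 * k) 1) :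
    Bp = bp ∧ Bm = bm := by
  have h_shift (k : ℕ) : (2 * (2 * μ + k - 1) : ℝ) = 2 * (2 * (μ - 1 / 2) + k) := by ring
  refine ⟨Finsupp.lhom_ext_even_odd (fun k => ?_) (fun k => ?_),
    Finsupp.lhom_ext_even_odd (fun k => ?_) (fun k => ?_)⟩
  · rw [hBp_even, hbp_even, h_shift]
  · rw [hBp_odd, hbp_odd]
  · cases k with
    | zero => rw [Nat.mul_zero, hBm_zero, hbm_zero]
    | succ k => rw [hBm_even, hbm_even]
  · rw [hBm_odd, hbm_odd, h_shift]

/-- for μ > 1/2, the second representation class (basis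
indexed from -1, realized via f_j ↔ e_{j-1}) coincides with the first
representation class with parameter μ̄ = μ - 1/2; hence the two classes are
equivalent and there is only one class of irreducible ∗-representations of
osp(1|2), parametrized by μ > 0. -/
theorem second_class_equivalent_to_first
    (μ : ℝ) (hμ : 1 / 2 < μ)
    (Bp Bm bp bm : Module.End ℂ (ℕ →₀ ℂ))
    -- second representation class, shifted to ℕ via f_j ↔ e_{j-1}
    (hBm_zero : Bm (Finsupp.single 0 1) = 0)
    (hBp_even : ∀ k : ℕ, Bp (Finsupp.single (2 * k) 1) =
      ((Real.sqrt (2 * (2 * μ + k - 1)) : ℝ) : ℂ) • Finsupp.single (2 * k + 1) 1)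
    (hBm_even : ∀ k : ℕ, Bm (Finsupp.single (2 * (k + 1)) 1) =
      ((Real.sqrt (2 * (k + 1)) : ℝ) : ℂ) • Finsupp.single (2 * k + 1) 1)
    (hBp_odd : ∀ k : ℕ, Bp (Finsupp.single (2 * k + 1) 1) =
      ((Real.sqrt (2 * (k + 1)) : ℝ) : ℂ) • Finsupp.single (2 * k + 2) 1)
    (hBm_odd : ∀ k : ℕ, Bm (Finsupp.single (2 * k + 1) 1) =
      ((Real.sqrt (2 * (2 * μ + k - 1)) : ℝ) : ℂ) • Finsupp.single (2 * k) 1)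
    -- first representation class with parameter μ̄ = μ - 1/2
    (hbp_even : ∀ k : ℕ, bp (Finsupp.single (2 * k) 1) =
      ((Real.sqrt (2 * (2 * (μ - 1 / 2) + k)) : ℝ) : ℂ) • Finsupp.single (2 * k + 1) 1)
    (hbm_zero : bm (Finsupp.single 0 1) = 0)
    (hbm_even : ∀ k : ℕ, bm (Finsupp.single (2 * (k + 1)) 1) =
      ((Real.sqrt (2 * (k + 1)) : ℝ) : ℂ) • Finsupp.single (2 * k + 1) 1)
    (hbp_odd : ∀ k : ℕ, bp (Finsupp.single (2 * k + 1) 1) =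
      ((Real.sqrt (2 * (k + 1)) : ℝ) : ℂ) • Finsupp.single (2 * k + 2) 1)
    (hbm_odd : ∀ k : ℕ, bm (Finsupp.single (2 * k + 1) 1) =
      ((Real.sqrt (2 * (2 * (μ - 1 / 2) + k)) : ℝ) : ℂ) • Finsupp.single (2 * k) 1) :
    Bp = bp ∧ Bm = bm :=
  second_class_equivalent_to_first_general μ Bp Bm bp bm hBm_zero hBp_even hBm_even hBp_odd hBm_odd
    hbp_even hbm_zero hbm_even hbp_odd hbm_odd
end
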